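/- For the map Q(F) = F − (1/ϖ) W F R, where W and R are symmetric positive semidefinite matrices and ϖ ≥ ‖W‖·‖R‖ with ϖ > 0, Q is nonexpansive with respect to the Frobenius norm: ‖Q(F) − Q(G)‖_Fr ≤ ‖F − G‖_Fr for all F, G. -/

import Mathlib

/-!
Vectorising, `vec (W D R) = (R ⊗ₖ W) *ᵥ vec D`, so `Q` acts on `vec` as `1 - ϖ⁻¹ K` with
`K = R ⊗ₖ W` positive semidefinite. Conjugating `W ≤ ‖W‖ • 1` by `√W` gives `W² ≤ ‖W‖ • W`,
likewise for `R`, and Kronecker products are monotone on positive matrices, so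
`K² ≤ ‖W‖‖R‖ • K`, i.e. `‖K x‖² ≤ ‖W‖‖R‖ ⟪x, K x⟫`. Expanding `‖x - c K x‖²` then shows that it
is at most `‖x‖²` whenever `c ‖W‖‖R‖ ≤ 2`.
-/

open Matrix

noncomputable def vecNorm {n : ℕ} (x : Fin n → ℝ) : ℝ :=
  Real.sqrt (∑ i, (x i) ^ 2)

noncomputable def frobNorm {L P : ℕ} (A : Matrix (Fin L) (Fin P) ℝ) : ℝ :=
  Real.sqrt (∑ i, ∑ j, (A i j) ^ 2)

noncomputable def specNorm {L P : ℕ} (A : Matrix (Fin L) (Fin P) ℝ) : ℝ :=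
  sSup {c : ℝ | ∃ x : Fin P → ℝ, vecNorm x = 1 ∧ c = vecNorm (A.mulVec x)}

open scoped MatrixOrder Matrix.Norms.L2Operator Kronecker RealInnerProductSpace ComplexOrder

theorem norm_sub_smul_le_norm_of_sq_norm_le_inner {E : Type*} [NormedAddCommGroup E]
    [InnerProductSpace ℝ E] {x y : E} {lam c : ℝ} (hy : ‖y‖ ^ 2 ≤ lam * ⟪x, y⟫)
    (hxy : 0 ≤ ⟪x, y⟫) (hc : 0 ≤ c) (hclam : c * lam ≤ 2) : ‖x - c • y‖ ≤ ‖x‖ := by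
  refine le_of_pow_le_pow_left₀ two_ne_zero (norm_nonneg x) ?_
  rw [norm_sub_sq_real, norm_smul, inner_smul_right, mul_pow, Real.norm_of_nonneg hc]
  nlinarith [mul_le_mul_of_nonneg_left hy (sq_nonneg c), mul_nonneg hc hxy]

namespace Matrix

variable {𝕜 ι κ : Type*} [Fintype ι] [Fintype κ]

theorem kronecker_le_kronecker [RCLike 𝕜] {A A' : Matrix ι ι 𝕜} {B B' : Matrix κ κ 𝕜}
    (hA : 0 ≤ A) (hAA' : A ≤ A') (hB : 0 ≤ B) (hBB' : B ≤ B') : A ⊗ₖ B ≤ A' ⊗ₖ B' := by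
  have split : A' ⊗ₖ B' - A ⊗ₖ B = (A' - A) ⊗ₖ B' + A ⊗ₖ (B' - B) := by
    ext; simp only [sub_apply, add_apply, kroneckerMap_apply]; ring
  rw [le_iff, split]
  exact ((le_iff.mp hAA').kronecker (nonneg_iff_posSemidef.mp (hB.trans hBB'))).add
    ((nonneg_iff_posSemidef.mp hA).kronecker (le_iff.mp hBB'))

theorem dotProduct_mulVec_le_l2_opNorm_mul [DecidableEq ι] (W : Matrix ι ι ℝ) (x : ι → ℝ) :
    x ⬝ᵥ W *ᵥ x ≤ ‖W‖ * (x ⬝ᵥ x) := by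
  set v : EuclideanSpace ℝ ι := WithLp.toLp 2 x
  have hv : ‖v‖ ^ 2 = x ⬝ᵥ x := by
    rw [← real_inner_self_eq_norm_sq, EuclideanSpace.inner_eq_star_dotProduct, star_trivial]
  calc x ⬝ᵥ W *ᵥ x = ⟪v, WithLp.toLp 2 (W *ᵥ x)⟫ := by
        rw [EuclideanSpace.inner_eq_star_dotProduct, star_trivial, dotProduct_comm]
    _ ≤ ‖v‖ * ‖(WithLp.toLp 2 (W *ᵥ x) : EuclideanSpace ℝ ι)‖ := real_inner_le_norm _ _
    _ ≤ ‖v‖ * (‖W‖ * ‖v‖) := by gcongr; exact l2_opNorm_mulVec W v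
    _ = ‖W‖ * (x ⬝ᵥ x) := by rw [← hv]; ring

theorem IsHermitian.le_l2_opNorm_smul_one [DecidableEq ι] {W : Matrix ι ι ℝ}
    (hW : W.IsHermitian) : W ≤ ‖W‖ • (1 : Matrix ι ι ℝ) := by
  refine le_iff.mpr (.of_dotProduct_mulVec_nonneg ?_ fun x => ?_)
  · exact (isHermitian_one.smul (IsSelfAdjoint.all _)).sub hW
  · simp only [star_trivial, sub_mulVec, smul_mulVec, one_mulVec, dotProduct_sub,
      dotProduct_smul, smul_eq_mul]
    linarith [dotProduct_mulVec_le_l2_opNorm_mul W x]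

theorem PosSemidef.mul_self_le_l2_opNorm_smul [DecidableEq ι] {W : Matrix ι ι ℝ}
    (hW : W.PosSemidef) : W * W ≤ ‖W‖ • W := by
  set S := CFC.sqrt W
  have hSS : S * S = W := CFC.sqrt_mul_sqrt_self W hW.nonneg
  have hS : star S = S := (CFC.sqrt_nonneg W).isSelfAdjoint
  calc W * W = star S * W * S := by rw [hS, ← hSS]; simp only [mul_assoc]
    _ ≤ star S * (‖W‖ • 1) * S :=
        star_left_conjugate_le_conjugate hW.isHermitian.le_l2_opNorm_smul_one S
    _ = ‖W‖ • W := by rw [hS, mul_smul_comm, mul_one, smul_mul_assoc, hSS]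

theorem PosSemidef.kronecker_mul_self_le_l2_opNorm_smul [DecidableEq ι] [DecidableEq κ]
    {R : Matrix ι ι ℝ} {W : Matrix κ κ ℝ} (hR : R.PosSemidef) (hW : W.PosSemidef) :
    (R ⊗ₖ W) * (R ⊗ₖ W) ≤ (‖R‖ * ‖W‖) • (R ⊗ₖ W) := by
  rw [← mul_kronecker_mul, mul_smul, ← kronecker_smul, ← smul_kronecker]
  exact kronecker_le_kronecker hR.isHermitian.isSelfAdjoint.mul_self_nonneg
    hR.mul_self_le_l2_opNorm_smul hW.isHermitian.isSelfAdjoint.mul_self_nonneg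
    hW.mul_self_le_l2_opNorm_smul

theorem PosSemidef.norm_sub_smul_mulVec_le {K : Matrix ι ι ℝ} (hK : K.PosSemidef) {lam c : ℝ}
    (hKK : K * K ≤ lam • K) (hc : 0 ≤ c) (hclam : c * lam ≤ 2) (x : ι → ℝ) :
    ‖(WithLp.toLp 2 (x - c • (K *ᵥ x)) : EuclideanSpace ℝ ι)‖ ≤
      ‖(WithLp.toLp 2 x : EuclideanSpace ℝ ι)‖ := by
  have hinner :
      ⟪(WithLp.toLp 2 x : EuclideanSpace ℝ ι), WithLp.toLp 2 (K *ᵥ x)⟫ = x ⬝ᵥ K *ᵥ x := by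
    rw [EuclideanSpace.inner_eq_star_dotProduct, star_trivial, dotProduct_comm]
  have hnorm : ‖(WithLp.toLp 2 (K *ᵥ x) : EuclideanSpace ℝ ι)‖ ^ 2 = x ⬝ᵥ (K * K) *ᵥ x := by
    rw [← real_inner_self_eq_norm_sq, EuclideanSpace.inner_eq_star_dotProduct, star_trivial,
      ← mulVec_mulVec, dotProduct_mulVec x, ← mulVec_transpose,
      ← conjTranspose_eq_transpose_of_trivial, hK.isHermitian.eq]
  have hgap := (le_iff.mp hKK).dotProduct_mulVec_nonneg x
  simp only [star_trivial, sub_mulVec, smul_mulVec, dotProduct_sub, dotProduct_smul,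
    smul_eq_mul] at hgap
  rw [WithLp.toLp_sub, WithLp.toLp_smul]
  refine norm_sub_smul_le_norm_of_sq_norm_le_inner ?_ ?_ hc hclam
  · rw [hnorm, hinner]; linarith
  · rw [hinner]; simpa using hK.dotProduct_mulVec_nonneg x

end Matrix

theorem vecNorm_eq_norm {n : ℕ} (x : Fin n → ℝ) :
    vecNorm x = ‖(WithLp.toLp 2 x : EuclideanSpace ℝ (Fin n))‖ := by
  simp [vecNorm, EuclideanSpace.norm_eq]

theorem frobNorm_eq_norm_vec {L P : ℕ} (A : Matrix (Fin L) (Fin P) ℝ) :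
    frobNorm A = ‖(WithLp.toLp 2 A.vec : EuclideanSpace ℝ _)‖ := by
  simp only [frobNorm, EuclideanSpace.norm_eq, vec, Real.norm_eq_abs, sq_abs, Fintype.sum_prod_type]
  rw [Finset.sum_comm]

theorem specNorm_eq_l2_opNorm {L P : ℕ} (A : Matrix (Fin L) (Fin P) ℝ) : specNorm A = ‖A‖ := by
  rw [l2_opNorm_def, ← ContinuousLinearMap.sSup_sphere_eq_norm]
  refine congrArg sSup (Set.ext fun c => ?_)
  simp only [vecNorm_eq_norm, Set.mem_ofPred_eq, Set.mem_image, mem_sphere_zero_iff_norm]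
  constructor
  · rintro ⟨x, hx, rfl⟩
    exact ⟨WithLp.toLp 2 x, hx, by simp⟩
  · rintro ⟨v, hv, rfl⟩
    exact ⟨v.ofLp, hv, rfl⟩

/-- `Q(F) = F − (1/ϖ) W F R` with `W, R` symmetric positive
semidefinite and `ϖ ≥ ‖W‖‖R‖`, `ϖ > 0`, is nonexpansive in the Frobenius norm. -/
theorem stmt2 {L P : ℕ}
    (W : Matrix (Fin L) (Fin L) ℝ) (R : Matrix (Fin P) (Fin P) ℝ)
    (hW : W.PosSemidef) (hR : R.PosSemidef)
    (ϖ : ℝ) (hϖpos : 0 < ϖ) (hϖ : specNorm W * specNorm R ≤ ϖ)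
    (Q : Matrix (Fin L) (Fin P) ℝ → Matrix (Fin L) (Fin P) ℝ)
    (hQ : ∀ F, Q F = F - ϖ⁻¹ • (W * F * R)) :
    ∀ F G : Matrix (Fin L) (Fin P) ℝ, frobNorm (Q F - Q G) ≤ frobNorm (F - G) := by
  intro F G
  rw [specNorm_eq_l2_opNorm, specNorm_eq_l2_opNorm] at hϖ
  have hRsymm : Rᵀ = R := by rw [← conjTranspose_eq_transpose_of_trivial, hR.isHermitian.eq]
  have hvec : (Q F - Q G).vec = (F - G).vec - ϖ⁻¹ • ((R ⊗ₖ W) *ᵥ (F - G).vec) := by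
    rw [kronecker_mulVec_vec, hRsymm, hQ, hQ, ← vec_smul, ← vec_sub, Matrix.mul_sub,
      Matrix.sub_mul, smul_sub]
    congr 1
    abel
  have hKK : (R ⊗ₖ W) * (R ⊗ₖ W) ≤ (‖W‖ * ‖R‖) • (R ⊗ₖ W) := by
    rw [mul_comm]
    exact hR.kronecker_mul_self_le_l2_opNorm_smul hW
  have hstep : ϖ⁻¹ * (‖W‖ * ‖R‖) ≤ 2 := ((inv_mul_le_one₀ hϖpos).mpr hϖ).trans one_le_two
  rw [frobNorm_eq_norm_vec, frobNorm_eq_norm_vec, hvec]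
  exact (hR.kronecker hW).norm_sub_smul_mulVec_le hKK (inv_nonneg.mpr hϖpos.le) hstep _
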